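/- Let k be a field, and let T and U be k-linear categories equipped with k-linear involutive equivalences D_T : T ≌ T^op and D_U : U ≌ U^op, where U also carries a shift auto-equivalence ⟦1⟧. Let i^* : T → U be a k-linear functor and define i^! := D_T ⋙ (i^*)^op ⋙ (D_U)^{-1} : T → U. Assume that for some integer n there is a natural isomorphism i^! ≅ i^* ⋙ ⟦-n⟧. Let P be a self-dual object of U with a natural isomorphism of functors from U to k-vector spaces between Z ↦ Hom_U(P, Z) and Z ↦ Hom_k(Hom_U(Z, P), k). Then for every self-dual object X of T there is a k-linear isomorphism Hom_U(P, i^!(X)) ≅ Hom_k(Hom_U(P, (i^!(X))⟦n⟧), k). -/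

import Mathlib

/-!
Write `Y = i^! X`. The hypothesis on `P` makes `Hom(P, Y)` the `k`-dual of `Hom(Y, P)`.
Applying `D_U` and using `D_U P ≅ P` identifies `Hom(Y, P)` with `Hom(P, D_U Y)`, and
`D_U Y ≅ i^*(D_T X) ≅ i^* X ≅ Y⟦n⟧` by self-duality of `X` and the shift relation
`i^! ≅ i^* ⋙ ⟦-n⟧`.
-/

open CategoryTheory

def CategoryTheory.Equivalence.IsInvolution {A : Type*} [Category A] (D : A ≌ Aᵒᵖ) : Prop :=
  Nonempty (D.functor ⋙ D.functor.leftOp ≅ 𝟭 A)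

namespace CategoryTheory

def Functor.FullyFaithful.unopHomLinearEquiv (k : Type*) [Semiring k] {C D : Type*}
    [Category C] [Category D] [Preadditive C] [Preadditive D]
    [CategoryTheory.Linear k C] [CategoryTheory.Linear k D]
    {F : C ⥤ Dᵒᵖ} (hF : F.FullyFaithful) [F.Additive]
    (hlin : ∀ (X Y : C) (c : k) (f : X ⟶ Y), (F.map (c • f)).unop = c • (F.map f).unop)
    (A B : C) : (A ⟶ B) ≃ₗ[k] ((F.obj B).unop ⟶ (F.obj A).unop) :=
  { hF.homEquiv.trans (opEquiv (F.obj A) (F.obj B)) with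
    map_add' := fun f g => by simp [opEquiv]
    map_smul' := hlin A B }

def isoShiftOfIsoCompShift {A C U : Type*} [AddMonoid A] [Category C] [Category U]
    [HasShift U A] {F G : C ⥤ U} {i j : A} (e : F ≅ G ⋙ shiftFunctor U i) (h : i + j = 0)
    (X : C) : G.obj X ≅ (shiftFunctor U j).obj (F.obj X) :=
  ((shiftFunctorCompIsoId U i j h).app (G.obj X)).symm ≪≫
    (shiftFunctor U j).mapIso (e.app X).symm

end CategoryTheory

theorem poincare_duality_shriek_selfdual_general
    (k : Type*) [Field k] {T U : Type*} [Category T] [Category U]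
    [Preadditive U] [Linear k U]
    (DT : T ≌ Tᵒᵖ) (DU : U ≌ Uᵒᵖ) [DU.functor.Additive]
    (hDUlin : ∀ (X Y : U) (c : k) (f : X ⟶ Y),
      (DU.functor.map (c • f)).unop = c • (DU.functor.map f).unop)
    [HasShift U ℤ]
    (istar : T ⥤ U) (n : ℤ)
    (hshift : DT.functor ⋙ istar.op ⋙ DU.inverse ≅ istar ⋙ shiftFunctor U (-n))
    (P : U) (hP : Nonempty ((DU.functor.obj P).unop ≅ P))
    (η : ∀ Z : U, (P ⟶ Z) ≃ₗ[k] ((Z ⟶ P) →ₗ[k] k)) :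
    ∀ X : T, Nonempty ((DT.functor.obj X).unop ≅ X) →
      Nonempty ((P ⟶ (DT.functor ⋙ istar.op ⋙ DU.inverse).obj X) ≃ₗ[k]
        ((P ⟶ (shiftFunctor U n).obj
          ((DT.functor ⋙ istar.op ⋙ DU.inverse).obj X)) →ₗ[k] k)) := by
  rintro X ⟨selfDualX⟩
  obtain ⟨selfDualP⟩ := hP
  set Y := (DT.functor ⋙ istar.op ⋙ DU.inverse).obj X
  have dualY : (DU.functor.obj Y).unop ≅ (shiftFunctor U n).obj Y :=
    (DU.counitIso.app _).unop.symm ≪≫ istar.mapIso selfDualX ≪≫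
      isoShiftOfIsoCompShift hshift (neg_add_cancel n) X
  have homToP : (Y ⟶ P) ≃ₗ[k] (P ⟶ (shiftFunctor U n).obj Y) :=
    (DU.fullyFaithfulFunctor.unopHomLinearEquiv k hDUlin Y P).trans
      (Linear.homCongr k selfDualP dualY)
  exact ⟨(η Y).trans homToP.symm.dualMap⟩

/-- Let `k` be a field, `T`, `U` `k`-linear categories with `k`-linear
involutive equivalences `D_T : T ≌ Tᵒᵖ`, `D_U : U ≌ Uᵒᵖ`, where `U` carries a shift.
Let `i^* : T ⥤ U` be a `k`-linear functor and `i^! := D_T ⋙ (i^*)ᵒᵖ ⋙ (D_U)⁻¹ : T ⥤ U`;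
assume `i^! ≅ i^* ⋙ ⟦-n⟧` for some integer `n`. Let `P` be a self-dual object of `U` with
a natural isomorphism between `Z ↦ Hom_U(P, Z)` and `Z ↦ Hom_k(Hom_U(Z, P), k)`. Then for
every self-dual object `X` of `T` there is a `k`-linear isomorphism
`Hom_U(P, i^! X) ≅ Hom_k(Hom_U(P, (i^! X)⟦n⟧), k)`. -/
theorem poincare_duality_shriek_selfdual
    (k : Type*) [Field k] {T U : Type*} [Category T] [Category U]
    [Preadditive T] [Preadditive U] [Linear k T] [Linear k U]
    (DT : T ≌ Tᵒᵖ) (DU : U ≌ Uᵒᵖ) [DT.functor.Additive] [DU.functor.Additive]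
    (hDTlin : ∀ (X Y : T) (c : k) (f : X ⟶ Y),
      (DT.functor.map (c • f)).unop = c • (DT.functor.map f).unop)
    (hDUlin : ∀ (X Y : U) (c : k) (f : X ⟶ Y),
      (DU.functor.map (c • f)).unop = c • (DU.functor.map f).unop)
    (hDT : DT.IsInvolution) (hDU : DU.IsInvolution)
    [HasShift U ℤ]
    (istar : T ⥤ U) [istar.Additive] [istar.Linear k] (n : ℤ)
    (hshift : DT.functor ⋙ istar.op ⋙ DU.inverse ≅ istar ⋙ shiftFunctor U (-n))
    (P : U) (hP : Nonempty ((DU.functor.obj P).unop ≅ P))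
    (η : ∀ Z : U, (P ⟶ Z) ≃ₗ[k] ((Z ⟶ P) →ₗ[k] k))
    (hη : ∀ (Z Z' : U) (φ : Z ⟶ Z') (f : P ⟶ Z) (g : Z' ⟶ P),
      η Z' (f ≫ φ) g = η Z f (φ ≫ g)) :
    ∀ X : T, Nonempty ((DT.functor.obj X).unop ≅ X) →
      Nonempty ((P ⟶ (DT.functor ⋙ istar.op ⋙ DU.inverse).obj X) ≃ₗ[k]
        ((P ⟶ (shiftFunctor U n).obj
          ((DT.functor ⋙ istar.op ⋙ DU.inverse).obj X)) →ₗ[k] k)) :=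
  poincare_duality_shriek_selfdual_general k DT DU hDUlin istar n hshift P hP η
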